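/- arXiv:1402.1775 — 3 statements merged into one kernel-verified Lean document; each statement's English description precedes it below -/
import Mathlib

section
/- Suppose T₁, T₂, T₃ are skew-symmetric endomorphisms of H such that [Jₐ, T_b] + [J_b, Tₐ] = 0 for all a ≠ b, and each Tₐ lies in Ψ[-1] (i.e. -∑_c J_c Tₐ J_c = -Tₐ) and commutes with Jₐ. Then J₁T₁ = J₂T₂ = J₃T₃. -/
open Matrix

/-- If `T₁, T₂, T₃` are skew-symmetric, satisfy `[Jₐ,T_b] + [J_b,Tₐ] = 0` for `a ≠ b`, lie in
the Casimir eigenspace `Ψ[-1]`, and each `Tₐ` commutes with `Jₐ`, then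
`J₁T₁ = J₂T₂ = J₃T₃`. -/
theorem JT_equal {n : ℕ}
    (J T : Fin 3 → Matrix (Fin n) (Fin n) ℝ)
    (hskewJ : ∀ a, (J a)ᵀ = -(J a))
    (hsq : ∀ a, J a * J a = -1)
    (hanti : ∀ a b, a ≠ b → J a * J b = -(J b * J a))
    (h123 : J 0 * J 1 * J 2 = -1)
    (hskewT : ∀ a, (T a)ᵀ = -(T a))
    (hbr : ∀ a b, a ≠ b →
      (J a * T b - T b * J a) + (J b * T a - T a * J b) = 0)
    (hPsi : ∀ a, -(∑ c, J c * T a * J c) = -(T a))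
    (hcomm : ∀ a, J a * T a = T a * J a) :
    J 0 * T 0 = J 1 * T 1 ∧ J 1 * T 1 = J 2 * T 2 := by
  have e01 := hbr 0 1 (by decide)
  have e02 := hbr 0 2 (by decide)
  have e12 := hbr 1 2 (by decide)
  have cas : ∀ a, J 0 * T a * J 0 + J 1 * T a * J 1 + J 2 * T a * J 2 = T a := by
    intro a
    have := hPsi a
    rw [neg_inj, Fin.sum_univ_three] at this
    exact this
  have hs0 := hsq 0
  have hs1 := hsq 1
  have hs2 := hsq 2
  have c0 := hcomm 0
  have c1 := hcomm 1
  have c2 := hcomm 2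
  -- quaternion products
  have p01 : J 0 * J 1 = J 2 := by
    linear_combination (norm := noncomm_ring) (J 0 * J 1) * hs2 - h123 * (J 2)
  have p12 : J 1 * J 2 = J 0 := by
    linear_combination (norm := noncomm_ring) hs0 * (J 1 * J 2) - (J 0) * h123
  have q02 : J 0 * J 2 = -(J 1) := by
    linear_combination (norm := noncomm_ring) hs0 * (J 1) - (J 0) * p01
  have q10 : J 1 * J 0 = -(J 2) := by
    linear_combination (norm := noncomm_ring) hanti 1 0 (by decide) - p01
  have q21 : J 2 * J 1 = -(J 0) := by
    linear_combination (norm := noncomm_ring) hanti 2 1 (by decide) - p12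
  have p20 : J 2 * J 0 = J 1 := by
    linear_combination (norm := noncomm_ring) hanti 2 0 (by decide) - q02
  -- key identities
  have hA : J 1 * T 0 * J 2 = J 0 * T 0 - J 1 * T 1 - J 0 * T 1 * J 2 := by
    linear_combination (norm := noncomm_ring) e01*(J 2) + (T 1)*q02 + (T 0)*p12 + c1 - c0
  have hB : J 2 * T 0 * J 1 = J 1 * T 1 - J 0 * T 0 - J 2 * T 1 * J 0 := by
    linear_combination (norm := noncomm_ring) p20*(T 1) + q21*(T 0) - (J 2)*e01
  have hC : J 2 * T 0 * J 1 = J 2 * T 2 - J 0 * T 0 - J 0 * T 2 * J 1 := by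
    linear_combination (norm := noncomm_ring) e02*(J 1) + (T 2)*p01 + (T 0)*q21 + c0 - c2
  have hD : J 2 * T 1 * J 0 = J 1 * T 1 - J 2 * T 2 - J 1 * T 2 * J 0 := by
    linear_combination (norm := noncomm_ring) e12*(J 0) + (T 2)*q10 + (T 1)*p20 + c2 - c1
  have hE : J 1 * T 0 * J 2 = J 0 * T 0 - J 2 * T 2 - J 1 * T 2 * J 0 := by
    linear_combination (norm := noncomm_ring) p12*(T 0) + q10*(T 2) - (J 1)*e02
  have hF : J 0 * T 1 * J 2 = J 2 * T 2 - J 1 * T 1 - J 0 * T 2 * J 1 := by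
    linear_combination (norm := noncomm_ring) p01*(T 2) + q02*(T 1) - (J 0)*e12
  have h1 : J 1 * T 0 * J 1 + T 0 = T 1 * J 2 - J 0 * T 1 * J 1 := by
    linear_combination (norm := noncomm_ring) e01*(J 1) + (T 1)*p01 + (T 0)*hs1
  have h2 : J 2 * T 0 * J 2 + T 0 = -(T 2 * J 1) - J 0 * T 2 * J 2 := by
    linear_combination (norm := noncomm_ring) e02*(J 2) + (T 2)*q02 + (T 0)*hs2
  have h3 : 4*(T 0) = T 1 * J 2 - T 2 * J 1 - J 0 * T 1 * J 1 - J 0 * T 2 * J 2 := by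
    linear_combination (norm := noncomm_ring) h1 + h2 - cas 0 + c0*(J 0) + (T 0)*hs0
  have hI : 4*(J 0 * T 0) = J 0 * T 1 * J 2 - J 0 * T 2 * J 1 + J 1 * T 1 + J 2 * T 2 := by
    linear_combination (norm := noncomm_ring) (J 0)*h3 - hs0*(T 1 * J 1) - hs0*(T 2 * J 2) - c1 - c2
  have h1c : J 2 * T 1 * J 2 + T 1 = T 2 * J 0 - J 1 * T 2 * J 2 := by
    linear_combination (norm := noncomm_ring) e12*(J 2) + (T 2)*p12 + (T 1)*hs2
  have h2c : J 0 * T 1 * J 0 + T 1 = -(T 0 * J 2) - J 1 * T 0 * J 0 := by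
    linear_combination (norm := noncomm_ring) e01*(J 0) + (T 0)*q10 + (T 1)*hs0
  have h3c : 4*(T 1) = T 2 * J 0 - T 0 * J 2 - J 1 * T 2 * J 2 - J 1 * T 0 * J 0 := by
    linear_combination (norm := noncomm_ring) h1c + h2c - cas 1 + c1*(J 1) + (T 1)*hs1
  have hII : 4*(J 1 * T 1) = J 1 * T 2 * J 0 - J 1 * T 0 * J 2 + J 2 * T 2 + J 0 * T 0 := by
    linear_combination (norm := noncomm_ring) (J 1)*h3c - hs1*(T 2 * J 2) - hs1*(T 0 * J 0) - c2 - c0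
  have h1cc : J 0 * T 2 * J 0 + T 2 = T 0 * J 1 - J 2 * T 0 * J 0 := by
    linear_combination (norm := noncomm_ring) e02*(J 0) + (T 0)*p20 + (T 2)*hs0
  have h2cc : J 1 * T 2 * J 1 + T 2 = -(T 1 * J 0) - J 2 * T 1 * J 1 := by
    linear_combination (norm := noncomm_ring) e12*(J 1) + (T 1)*q21 + (T 2)*hs1
  have h3cc : 4*(T 2) = T 0 * J 1 - T 1 * J 0 - J 2 * T 0 * J 0 - J 2 * T 1 * J 1 := by
    linear_combination (norm := noncomm_ring) h1cc + h2cc - cas 2 + c2*(J 2) + (T 2)*hs2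
  have hIII : 4*(J 2 * T 2) = J 2 * T 0 * J 1 - J 2 * T 1 * J 0 + J 0 * T 0 + J 1 * T 1 := by
    linear_combination (norm := noncomm_ring) (J 2)*h3cc - hs2*(T 0 * J 0) - hs2*(T 1 * J 1) - c0 - c1
  have h4a : J 0 * T 0 + J 0 * T 0 + J 0 * T 0 + J 0 * T 0
      = J 1 * T 1 + J 1 * T 1 + J 1 * T 1 + J 1 * T 1 := by
    linear_combination (norm := noncomm_ring) hI - hII + 2*hA - hE - hF
  have h4b : J 1 * T 1 + J 1 * T 1 + J 1 * T 1 + J 1 * T 1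
      = J 2 * T 2 + J 2 * T 2 + J 2 * T 2 + J 2 * T 2 := by
    linear_combination (norm := noncomm_ring) hII - hIII - hB + 2*hD - hE
  constructor
  · ext i k
    have h := congrFun (congrFun h4a i) k
    simp only [Matrix.add_apply] at h
    linarith
  · ext i k
    have h := congrFun (congrFun h4b i) k
    simp only [Matrix.add_apply] at h
    linarith
end

section
/- Under the hypotheses guaranteeing J₁T₁ = J₂T₂ = J₃T₃ for skew-symmetric operators Tₐ each commuting with Jₐ and anticommuting with J_b for b ≠ a, we have: ‖Tₐ‖ = ‖T_b‖ for all a, b; for a ≠ b the anticommutator TₐT_b + T_bTₐ = 0; and for a ≠ b and every vector X ∈ H, ⟨TₐX, T_bX⟩ = 0. -/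
/-!
Each `Jₐ` is orthogonal (`Jₐᵀ Jₐ = -Jₐ² = 1`), so `Tₐ = -JₐJ_b T_b` has the same Gram matrix
`TₐᵀTₐ = T_bᵀT_b` as `T_b`, hence the same Frobenius norm. Since `T_b` anticommutes with `Jₐ` and
commutes with `J_b`, it anticommutes with `JₐJ_b`, and substituting `Tₐ = -JₐJ_b T_b` makes the
anticommutator `TₐT_b + T_bTₐ` vanish. Finally `⟨TₐX, T_bX⟩ = ⟨X, TₐᵀT_b X⟩ = -⟨X, TₐT_b X⟩`, and
`TₐT_b` is skew-symmetric because `Tₐ`, `T_b` are skew-symmetric and anticommute; the quadratic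
form of a skew-symmetric matrix vanishes.
-/

open Matrix

section Ring

variable {R : Type*} [Ring R] {a b x y : R}

lemma mul_mul_eq_neg_of_mul_eq_neg_of_commute (ha : y * a = -(a * y)) (hb : Commute y b) :
    y * (a * b) = -(a * b * y) := by
  rw [← mul_assoc, ha, neg_mul, mul_assoc, hb.eq, ← mul_assoc]

lemma mul_add_mul_eq_zero_of_eq_neg_mul (hx : x = -(a * y)) (hy : y * a = -(a * y)) :
    x * y + y * x = 0 := by
  rw [hx, neg_mul, mul_neg, ← mul_assoc, hy, neg_mul, neg_neg, neg_add_cancel]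

end Ring

namespace Matrix

variable {m R : Type*} [Fintype m]

section CommRing

variable [CommRing R]

lemma transpose_mul_self_eq_one_of_transpose_eq_neg [DecidableEq m] {J : Matrix m m R}
    (hskew : Jᵀ = -J) (hsq : J * J = -1) : Jᵀ * J = 1 := by
  rw [hskew, neg_mul, hsq, neg_neg]

lemma transpose_mul_self_mul_left [DecidableEq m] {Q : Matrix m m R} (hQ : Qᵀ * Q = 1)
    (A : Matrix m m R) : (Q * A)ᵀ * (Q * A) = Aᵀ * A := by
  rw [transpose_mul, mul_assoc, ← mul_assoc Qᵀ, hQ, one_mul]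

lemma mulVec_dotProduct_mulVec (A B : Matrix m m R) (x y : m → R) :
    A *ᵥ x ⬝ᵥ B *ᵥ y = x ⬝ᵥ (Aᵀ * B) *ᵥ y := by
  rw [← mulVec_mulVec, dotProduct_mulVec x Aᵀ, vecMul_transpose]

lemma transpose_mul_eq_neg_of_anticommute {A B : Matrix m m R} (hA : Aᵀ = -A) (hB : Bᵀ = -B)
    (hAB : A * B + B * A = 0) : (Aᵀ * B)ᵀ = -(Aᵀ * B) := by
  rw [transpose_mul, transpose_transpose, hA, hB, neg_mul, neg_mul, neg_neg,
    eq_neg_of_add_eq_zero_right hAB, neg_neg]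

end CommRing

variable [CommRing R] [NoZeroDivisors R] [CharZero R]

lemma dotProduct_mulVec_self_eq_zero {S : Matrix m m R} (hS : Sᵀ = -S) (x : m → R) :
    x ⬝ᵥ S *ᵥ x = 0 := by
  have h : x ⬝ᵥ S *ᵥ x = -(x ⬝ᵥ S *ᵥ x) :=
    calc x ⬝ᵥ S *ᵥ x = Sᵀ *ᵥ x ⬝ᵥ x := by rw [mulVec_transpose, dotProduct_mulVec]
      _ = -(x ⬝ᵥ S *ᵥ x) := by rw [hS, neg_mulVec, neg_dotProduct, dotProduct_comm]
  exact CharZero.eq_neg_self_iff.mp h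

lemma mulVec_dotProduct_mulVec_eq_zero_of_anticommute {A B : Matrix m m R} (hA : Aᵀ = -A)
    (hB : Bᵀ = -B) (hAB : A * B + B * A = 0) (x : m → R) : A *ᵥ x ⬝ᵥ B *ᵥ x = 0 := by
  rw [mulVec_dotProduct_mulVec]
  exact dotProduct_mulVec_self_eq_zero (transpose_mul_eq_neg_of_anticommute hA hB hAB) x

end Matrix

theorem torsion_orthogonality_general {n : ℕ}
    (J T : Fin 3 → Matrix (Fin n) (Fin n) ℝ)
    (hskewJ : ∀ a, (J a)ᵀ = -(J a))
    (hsq : ∀ a, J a * J a = -1)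
    (hskewT : ∀ a, (T a)ᵀ = -(T a))
    (hcomm : ∀ a, J a * T a = T a * J a)
    (hacomm : ∀ a b, b ≠ a → J b * T a = -(T a * J b))
    (hrel : ∀ a b, a ≠ b → T a = -(J a * J b * T b)) :
    (∀ a b, Real.sqrt (Matrix.trace ((T a)ᵀ * T a)) =
        Real.sqrt (Matrix.trace ((T b)ᵀ * T b))) ∧
    (∀ a b, a ≠ b → T a * T b + T b * T a = 0) ∧
    (∀ a b, a ≠ b → ∀ X : Fin n → ℝ,
        (T a).mulVec X ⬝ᵥ (T b).mulVec X = 0) := by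
  have hJ a : (J a)ᵀ * J a = 1 := transpose_mul_self_eq_one_of_transpose_eq_neg (hskewJ a) (hsq a)
  have hgram a b (hab : a ≠ b) : (T a)ᵀ * T a = (T b)ᵀ * T b := by
    rw [hrel a b hab, transpose_neg, neg_mul_neg, mul_assoc,
      transpose_mul_self_mul_left (hJ a), transpose_mul_self_mul_left (hJ b)]
  have hanti a b (hab : a ≠ b) : T a * T b + T b * T a = 0 := by
    have hTJ : T b * J a = -(J a * T b) := by rw [hacomm b a hab, neg_neg]
    exact mul_add_mul_eq_zero_of_eq_neg_mul (hrel a b hab)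
      (mul_mul_eq_neg_of_mul_eq_neg_of_commute hTJ (hcomm b).symm)
  refine ⟨fun a b => ?_, hanti, fun a b hab X =>
    mulVec_dotProduct_mulVec_eq_zero_of_anticommute (hskewT a) (hskewT b) (hanti a b hab) X⟩
  rcases eq_or_ne a b with rfl | hab
  · rfl
  · rw [hgram a b hab]

/-- For skew-symmetric torsion operators `Tₐ` with `Tₐ` commuting with `Jₐ`, anticommuting with
`J_b` for `b ≠ a`, and `Tₐ = -JₐJ_b T_b` for `a ≠ b`: all `Tₐ` have equal Frobenius norm,
`TₐT_b + T_bTₐ = 0` for `a ≠ b`, and `⟨TₐX, T_bX⟩ = 0` for every vector `X` when `a ≠ b`. -/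
theorem torsion_orthogonality {n : ℕ}
    (J T : Fin 3 → Matrix (Fin n) (Fin n) ℝ)
    (hskewJ : ∀ a, (J a)ᵀ = -(J a))
    (hsq : ∀ a, J a * J a = -1)
    (hantiJ : ∀ a b, a ≠ b → J a * J b = -(J b * J a))
    (h123 : J 0 * J 1 * J 2 = -1)
    (hskewT : ∀ a, (T a)ᵀ = -(T a))
    (hcomm : ∀ a, J a * T a = T a * J a)
    (hacomm : ∀ a b, b ≠ a → J b * T a = -(T a * J b))
    (hrel : ∀ a b, a ≠ b → T a = -(J a * J b * T b)) :
    (∀ a b, Real.sqrt (Matrix.trace ((T a)ᵀ * T a)) =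
        Real.sqrt (Matrix.trace ((T b)ᵀ * T b))) ∧
    (∀ a b, a ≠ b → T a * T b + T b * T a = 0) ∧
    (∀ a b, a ≠ b → ∀ X : Fin n → ℝ,
        (T a).mulVec X ⬝ᵥ (T b).mulVec X = 0) :=
  torsion_orthogonality_general J T hskewJ hsq hskewT hcomm hacomm hrel
end

section
/- The set 𝔱 = {A ∈ 𝔰𝔬(h) : [A, 𝔰𝔭₁] ⊆ 𝔰𝔭₁} equals 𝔰𝔭₁ ⊕ 𝔱₀ where 𝔱₀ = {A ∈ 𝔰𝔬(h) : [A, 𝔰𝔭₁] = 0}; that is, a skew-symmetric operator whose bracket with the quaternionic 𝔰𝔭₁ stays in 𝔰𝔭₁ decomposes uniquely as a sum of an element of 𝔰𝔭₁ and an element commuting with all of 𝔰𝔭₁. -/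
/-!
Averaging over conjugation by the quaternion units, `P X = (X - ∑ₐ Jₐ X Jₐ) / 4`, is a linear
projection onto the centralizer `𝔱₀` of the `Jₐ` that kills `𝔰𝔭₁`; in particular
`𝔰𝔭₁ ∩ 𝔱₀ = 0`, which gives uniqueness. The complementary part is a double commutator,
`X - P X = -(1/8) ∑ₐ [[X, Jₐ], Jₐ]`, so it lies in `𝔰𝔭₁` as soon as every `[X, Jₐ]` does,
`𝔰𝔭₁` being closed under brackets with the `Jₐ`. Since `𝔰𝔭₁` consists of skew-symmetric
matrices, the `𝔱₀`-part of a skew-symmetric `A` is skew-symmetric too.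
-/

open Matrix

section Quaternionic

variable {K R : Type*} [Field K] [Ring R] [Algebra K R] {J : Fin 3 → R}

theorem cyclic_products_of_quaternion (hsq : ∀ a, J a * J a = -1)
    (hanti : ∀ a b, a ≠ b → J a * J b = -(J b * J a)) (h123 : J 0 * J 1 * J 2 = -1) :
    J 0 * J 1 = J 2 ∧ J 1 * J 2 = J 0 ∧ J 2 * J 0 = J 1 := by
  have h01 : J 0 * J 1 = J 2 := by
    simpa [mul_assoc, hsq 2] using congrArg (· * J 2) h123
  have h12 : J 1 * J 2 = J 0 := by
    simpa [← mul_assoc, hsq 0] using congrArg (J 0 * ·) h123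
  refine ⟨h01, h12, ?_⟩
  rw [hanti 2 0 (by decide), ← h01, ← mul_assoc, hsq 0, neg_one_mul, neg_neg]

theorem commute_mul_add_mul_of_cyclic {x y z : R} (hxy : x * y = z) (hyx : y * x = -z)
    (hxz : x * z = -y) (hzx : z * x = y) (X : R) : Commute (y * X * y + z * X * z) x := by
  change (y * X * y + z * X * z) * x = x * (y * X * y + z * X * z)
  rw [add_mul, mul_add, mul_assoc (y * X), mul_assoc (z * X), hyx, hzx, ← mul_assoc x (y * X),
    ← mul_assoc x y, hxy, ← mul_assoc x (z * X), ← mul_assoc x z, hxz]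
  noncomm_ring

theorem commute_sub_mul_mul_self {x : R} (hx : x * x = -1) (X : R) :
    Commute (X - x * X * x) x := by
  change (X - x * X * x) * x = x * (X - x * X * x)
  rw [sub_mul, mul_sub, mul_assoc _ x x, hx, ← mul_assoc x (x * X), ← mul_assoc x x, hx]
  noncomm_ring

theorem commute_sub_sum_mul_mul (hsq : ∀ a, J a * J a = -1)
    (hanti : ∀ a b, a ≠ b → J a * J b = -(J b * J a)) (h123 : J 0 * J 1 * J 2 = -1)
    (X : R) (b : Fin 3) : Commute (X - ∑ a, J a * X * J a) (J b) := by
  obtain ⟨h01, h12, h20⟩ := cyclic_products_of_quaternion hsq hanti h123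
  have rev {a b : Fin 3} {x : R} (hab : a ≠ b) (h : J a * J b = x) : J b * J a = -x := by
    rw [hanti b a hab.symm, h]
  have key {a b c : Fin 3} (hab : J a * J b = J c) (hca : J c * J a = J b)
      (hne : a ≠ b ∧ c ≠ a) :
      Commute (X - J a * X * J a - (J b * X * J b + J c * X * J c)) (J a) :=
    (commute_sub_mul_mul_self (hsq a) X).sub_left
      (commute_mul_add_mul_of_cyclic hab (rev hne.1 hab) (rev hne.2 hca) hca X)
  rw [Fin.sum_univ_three]
  obtain rfl | rfl | rfl : b = 0 ∨ b = 1 ∨ b = 2 := by omega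
  · convert key h01 h20 (by decide) using 1; abel
  · convert key h12 h01 (by decide) using 1; abel
  · convert key h20 h12 (by decide) using 1; abel

variable (K) in
def sp1 (J : Fin 3 → R) : Submodule K R :=
  Submodule.span K {J 0, J 1, J 2}

theorem mem_sp1 (a : Fin 3) : J a ∈ sp1 K J := by
  fin_cases a <;> exact Submodule.subset_span (by simp)

theorem mul_mem_sp1 (hsq : ∀ a, J a * J a = -1)
    (hanti : ∀ a b, a ≠ b → J a * J b = -(J b * J a)) (h123 : J 0 * J 1 * J 2 = -1)
    {a b : Fin 3} (hab : a ≠ b) : J a * J b ∈ sp1 K J := by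
  obtain ⟨h01, h12, h20⟩ := cyclic_products_of_quaternion hsq hanti h123
  fin_cases a <;> fin_cases b <;>
    simp [hanti 1 0, hanti 2 1, hanti 0 2, h01, h12, h20, mem_sp1] at hab ⊢

theorem commutator_mem_sp1 (hsq : ∀ a, J a * J a = -1)
    (hanti : ∀ a b, a ≠ b → J a * J b = -(J b * J a)) (h123 : J 0 * J 1 * J 2 = -1)
    {X : R} (hX : X ∈ sp1 K J) (a : Fin 3) : X * J a - J a * X ∈ sp1 K J := by
  let ad : R →ₗ[K] R := LinearMap.mulRight K (J a) - LinearMap.mulLeft K (J a)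
  refine (Submodule.span_le (p := (sp1 K J).comap ad) |>.mpr ?_) hX
  have hJ b : J b * J a - J a * J b ∈ sp1 K J := by
    rcases eq_or_ne b a with rfl | hba
    · simp
    · exact sub_mem (mul_mem_sp1 hsq hanti h123 hba) (mul_mem_sp1 hsq hanti h123 hba.symm)
  rintro _ (rfl | rfl | rfl) <;> exact hJ _

variable (K) in
def centralizerProj (J : Fin 3 → R) : R →ₗ[K] R :=
  (4 : K)⁻¹ • (LinearMap.id - ∑ a, LinearMap.mulLeftRight K (J a, J a))

theorem centralizerProj_apply (X : R) :
    centralizerProj K J X = (4 : K)⁻¹ • (X - ∑ a, J a * X * J a) := by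
  simp [centralizerProj]

theorem commute_centralizerProj (hsq : ∀ a, J a * J a = -1)
    (hanti : ∀ a b, a ≠ b → J a * J b = -(J b * J a)) (h123 : J 0 * J 1 * J 2 = -1)
    (X : R) (a : Fin 3) : Commute (centralizerProj K J X) (J a) := by
  rw [centralizerProj_apply]
  exact (commute_sub_sum_mul_mul hsq hanti h123 X a).smul_left _

theorem four_ne_zero_of_two_ne_zero [NeZero (2 : K)] : (4 : K) ≠ 0 := by
  rw [show (4 : K) = 2 * 2 by norm_num]; exact mul_ne_zero two_ne_zero two_ne_zero

theorem centralizerProj_eq_self [NeZero (2 : K)] (hsq : ∀ a, J a * J a = -1) {X : R}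
    (hX : ∀ a, Commute X (J a)) : centralizerProj K J X = X := by
  have hconj a : J a * X * J a = -X := by rw [← (hX a).eq, mul_assoc, hsq, mul_neg_one]
  rw [centralizerProj_apply, Fin.sum_univ_three, hconj, hconj, hconj,
    inv_smul_eq_iff₀ four_ne_zero_of_two_ne_zero]
  module

theorem sum_mul_mul_self_eq (hsq : ∀ a, J a * J a = -1)
    (hanti : ∀ a b, a ≠ b → J a * J b = -(J b * J a)) (b : Fin 3) :
    ∑ a, J a * J b * J a = J b := by
  have hconj a (hab : a ≠ b) : J a * J b * J a = J b := by
    rw [hanti a b hab, neg_mul, mul_assoc, hsq, mul_neg_one, neg_neg]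
  have hself : J b * J b * J b = -J b := by rw [hsq, neg_one_mul]
  rw [Fin.sum_univ_three]
  obtain rfl | rfl | rfl : b = 0 ∨ b = 1 ∨ b = 2 := by omega
  all_goals simp [hconj, hself]

theorem centralizerProj_eq_zero_of_mem (hsq : ∀ a, J a * J a = -1)
    (hanti : ∀ a b, a ≠ b → J a * J b = -(J b * J a)) {X : R} (hX : X ∈ sp1 K J) :
    centralizerProj K J X = 0 := by
  refine (Submodule.span_le (p := LinearMap.ker (centralizerProj K J)) |>.mpr ?_) hX
  rintro _ (rfl | rfl | rfl) <;>
    simp [centralizerProj_apply, sum_mul_mul_self_eq hsq hanti]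

theorem sub_centralizerProj_eq [NeZero (2 : K)] (hsq : ∀ a, J a * J a = -1) (X : R) :
    X - centralizerProj K J X =
      -(8 : K)⁻¹ • ∑ a, ((X * J a - J a * X) * J a - J a * (X * J a - J a * X)) := by
  have hdouble a : (X * J a - J a * X) * J a - J a * (X * J a - J a * X) =
      -(2 : K) • (X + J a * X * J a) := by
    simp only [mul_sub, sub_mul, ← mul_assoc, hsq, neg_one_mul]
    simp only [mul_assoc, hsq, mul_neg_one]
    module
  have h4 : (4 : K) ≠ 0 := four_ne_zero_of_two_ne_zero
  have h8 : -(8 : K)⁻¹ * -2 = (4 : K)⁻¹ := by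
    rw [neg_mul_neg, show (8 : K) = 2 * 4 by norm_num, mul_inv, mul_right_comm,
      inv_mul_cancel₀ two_ne_zero, one_mul]
  rw [Finset.sum_congr rfl fun a _ ↦ hdouble a, ← Finset.smul_sum, smul_smul, h8,
    centralizerProj_apply]
  apply smul_right_injective R h4
  simp only [smul_sub, smul_smul, mul_inv_cancel₀ h4, one_smul, Finset.sum_add_distrib,
    Finset.sum_const, Finset.card_univ, Fintype.card_fin]
  module

theorem sub_centralizerProj_mem_sp1 [NeZero (2 : K)] (hsq : ∀ a, J a * J a = -1)
    (hanti : ∀ a b, a ≠ b → J a * J b = -(J b * J a)) (h123 : J 0 * J 1 * J 2 = -1) {X : R}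
    (hX : ∀ a, X * J a - J a * X ∈ sp1 K J) : X - centralizerProj K J X ∈ sp1 K J := by
  rw [sub_centralizerProj_eq hsq]
  exact Submodule.smul_mem _ _ <| Submodule.sum_mem _ fun a _ ↦
    commutator_mem_sp1 hsq hanti h123 (hX a) a

end Quaternionic

theorem Matrix.transpose_eq_neg_of_mem_span {ι α : Type*} [CommRing α]
    {s : Set (Matrix ι ι α)} (hs : ∀ X ∈ s, Xᵀ = -X) {X : Matrix ι ι α}
    (hX : X ∈ Submodule.span α s) : Xᵀ = -X := by
  induction hX using Submodule.span_induction with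
  | mem x hx => exact hs x hx
  | zero => simp
  | add x y _ _ hx hy => rw [transpose_add, hx, hy, neg_add]
  | smul c x _ hx => rw [transpose_smul, hx, smul_neg]

theorem t_eq_sp1_oplus_t0_general {n : ℕ}
    (J : Fin 3 → Matrix (Fin n) (Fin n) ℝ)
    (hskewJ : ∀ a, (J a)ᵀ = -(J a))
    (hsq : ∀ a, J a * J a = -1)
    (hantiJ : ∀ a b, a ≠ b → J a * J b = -(J b * J a))
    (h123 : J 0 * J 1 * J 2 = -1) :
    ∀ A : Matrix (Fin n) (Fin n) ℝ, Aᵀ = -A →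
      ((∀ a, A * J a - J a * A ∈ Submodule.span ℝ
          ({J 0, J 1, J 2} : Set (Matrix (Fin n) (Fin n) ℝ))) ↔
        ∃! p : Matrix (Fin n) (Fin n) ℝ × Matrix (Fin n) (Fin n) ℝ,
          A = p.1 + p.2 ∧
          p.1 ∈ Submodule.span ℝ
            ({J 0, J 1, J 2} : Set (Matrix (Fin n) (Fin n) ℝ)) ∧
          (p.2)ᵀ = -(p.2) ∧ ∀ a, p.2 * J a = J a * p.2) := by
  intro A hA
  change (∀ a, _ ∈ sp1 ℝ J) ↔ ∃! p : _ × _, _ ∧ p.1 ∈ sp1 ℝ J ∧ _ ∧ ∀ a, Commute p.2 (J a)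
  have hskew {X} : X ∈ sp1 ℝ J → Xᵀ = -X :=
    transpose_eq_neg_of_mem_span (by rintro _ (rfl | rfl | rfl) <;> exact hskewJ _)
  constructor
  · intro hAt
    have hB := sub_centralizerProj_mem_sp1 hsq hantiJ h123 hAt
    refine ⟨(A - centralizerProj ℝ J A, centralizerProj ℝ J A),
      ⟨(sub_add_cancel _ _).symm, hB, ?_, commute_centralizerProj hsq hantiJ h123 A⟩, ?_⟩
    · rw [← sub_sub_cancel A (centralizerProj ℝ J A), transpose_sub, hA, hskew hB, neg_sub_neg,
        neg_sub]
    · rintro ⟨B', C'⟩ ⟨hA', hB', -, hC'⟩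
      have hPA : centralizerProj ℝ J A = C' := by
        rw [hA', map_add, centralizerProj_eq_zero_of_mem hsq hantiJ hB',
          centralizerProj_eq_self hsq hC', zero_add]
      rw [hPA, hA', add_sub_cancel_right]
  · rintro ⟨⟨B, C⟩, ⟨rfl, hB, -, hC⟩, -⟩ a
    rw [add_mul, mul_add, (hC a).eq, add_sub_add_right_eq_sub]
    exact commutator_mem_sp1 hsq hantiJ h123 hB a

/-- A skew-symmetric operator `A` satisfies `[A, 𝔰𝔭₁] ⊆ 𝔰𝔭₁` if and only if it decomposes
uniquely as `A = B + C` with `B ∈ 𝔰𝔭₁` (the span of `J₁, J₂, J₃`) and `C` skew-symmetric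
commuting with all of `𝔰𝔭₁`; i.e. `𝔱 = 𝔰𝔭₁ ⊕ 𝔱₀`. -/
theorem t_eq_sp1_oplus_t0 {n m : ℕ} (hn : n = 4 * m)
    (J : Fin 3 → Matrix (Fin n) (Fin n) ℝ)
    (hskewJ : ∀ a, (J a)ᵀ = -(J a))
    (hsq : ∀ a, J a * J a = -1)
    (hantiJ : ∀ a b, a ≠ b → J a * J b = -(J b * J a))
    (h123 : J 0 * J 1 * J 2 = -1) :
    ∀ A : Matrix (Fin n) (Fin n) ℝ, Aᵀ = -A →
      ((∀ a, A * J a - J a * A ∈ Submodule.span ℝ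
          ({J 0, J 1, J 2} : Set (Matrix (Fin n) (Fin n) ℝ))) ↔
        ∃! p : Matrix (Fin n) (Fin n) ℝ × Matrix (Fin n) (Fin n) ℝ,
          A = p.1 + p.2 ∧
          p.1 ∈ Submodule.span ℝ
            ({J 0, J 1, J 2} : Set (Matrix (Fin n) (Fin n) ℝ)) ∧
          (p.2)ᵀ = -(p.2) ∧ ∀ a, p.2 * J a = J a * p.2) :=
  t_eq_sp1_oplus_t0_general J hskewJ hsq hantiJ h123
end
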